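/- arXiv:1208.3915 — 4 statements merged into one kernel-verified Lean document; each statement's English description precedes it below -/
import Mathlib

section
/- For all n ≥ 2, C_{2n-1} - ∑_{i=2}^{n} C_{2n-2i+1} * 2 * C_{2i-3} = 2^{2n-1} * C_{n-1} - C_{2n-1}, where C_m denotes the m-th Catalan number. -/
/-!
Splitting the Catalan recursion `C_{2m+3} = ∑_{a+b=2m+2} C_a C_b` by the parity of `a`, the even
part is Shapiro's convolution `∑_{j ≤ m+1} C_{2j} C_{2(m+1-j)} = 4^{m+1} C_{m+1}`, so the odd part is
`C_{2m+3} - 4^{m+1} C_{m+1}`; for `n = m + 2` the sum in the theorem is twice this odd part.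
Shapiro's convolution is proved by showing that both sides satisfy
`(n + 2) a_{n+1} = 8 (2n + 1) a_n`.
-/

open Finset

theorem add_two_mul_catalan_succ (n : ℕ) :
    (n + 2) * catalan (n + 1) = 2 * (2 * n + 1) * catalan n := by
  apply Nat.eq_of_mul_eq_mul_left n.succ_pos
  calc (n + 1) * ((n + 2) * catalan (n + 1))
      = (n + 1) * (n + 1).centralBinom := by rw [← succ_mul_catalan_eq_centralBinom]
    _ = 2 * (2 * n + 1) * n.centralBinom := Nat.succ_mul_centralBinom_succ n
    _ = (n + 1) * (2 * (2 * n + 1) * catalan n) := by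
      rw [← succ_mul_catalan_eq_centralBinom]; ring

theorem catalan_succ_eq_mul_catalan (n : ℕ) :
    (catalan (n + 1) : ℚ) = 2 * (2 * n + 1) / (n + 2) * catalan n := by
  rw [div_mul_eq_mul_div, eq_div_iff (by positivity), mul_comm]
  exact_mod_cast add_two_mul_catalan_succ n

theorem catalan_two_mul_add_two (m : ℕ) :
    (catalan (2 * m + 2) : ℚ) =
      4 * (4 * m + 1) * (4 * m + 3) / ((2 * m + 2) * (2 * m + 3)) * catalan (2 * m) := by
  rw [catalan_succ_eq_mul_catalan, catalan_succ_eq_mul_catalan]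
  push_cast
  field_simp
  ring

def evenCatalanConv (m : ℕ) : ℕ :=
  ∑ j ∈ range (m + 1), catalan (2 * j) * catalan (2 * (m - j))

/-- Zeilberger certificate for `evenCatalanConv`: its differences in `j` telescope the
recurrence `(n + 2) S(n + 1) = 8 (2n + 1) S(n)`. -/
def evenCatalanConvCertificate (n j : ℕ) : ℚ :=
  j * (4 * j ^ 2 - 6 * j * (n + 1) - (3 * n + 4)) * catalan (2 * j) * catalan (2 * (n + 1 - j))

theorem evenCatalanConvCertificate_succ_sub {n j : ℕ} (hj : j ≤ n) :
    evenCatalanConvCertificate n (j + 1) - evenCatalanConvCertificate n j =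
      (n + 1) * (2 * n + 3) * ((n + 2) * (catalan (2 * j) * catalan (2 * (n + 1 - j))) -
        8 * (2 * n + 1) * (catalan (2 * j) * catalan (2 * (n - j)))) := by
  obtain ⟨k, rfl⟩ := Nat.exists_eq_add_of_le hj
  have e₁ : j + k + 1 - (j + 1) = k := by omega
  have e₂ : 2 * (j + k + 1 - j) = 2 * k + 2 := by omega
  have e₃ : 2 * (j + k - j) = 2 * k := by omega
  simp only [evenCatalanConvCertificate, e₁, e₂, e₃, mul_add, mul_one,
    catalan_two_mul_add_two]
  push_cast
  field_simp
  ring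

theorem add_two_mul_evenCatalanConv_succ (n : ℕ) :
    ((n + 2) * evenCatalanConv (n + 1) : ℚ) = 8 * (2 * n + 1) * evenCatalanConv n := by
  have top : evenCatalanConvCertificate n (n + 1) =
      -((n + 1) * (n + 2) * (2 * n + 3) * catalan (2 * (n + 1))) := by
    simp only [evenCatalanConvCertificate, Nat.sub_self, mul_zero, catalan_zero]
    push_cast
    ring
  have bottom : evenCatalanConvCertificate n 0 = 0 := by simp [evenCatalanConvCertificate]
  have telescope := sum_range_sub (evenCatalanConvCertificate n) (n + 1)
  rw [sum_congr rfl fun j hj =>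
      evenCatalanConvCertificate_succ_sub (mem_range_succ_iff.mp hj),
    top, bottom, ← mul_sum, sum_sub_distrib, ← mul_sum,
    ← mul_sum] at telescope
  have split : (evenCatalanConv (n + 1) : ℚ) =
      ∑ j ∈ range (n + 1), (catalan (2 * j) * catalan (2 * (n + 1 - j)) : ℚ) +
        catalan (2 * (n + 1)) := by
    simp [evenCatalanConv, sum_range_succ (n := n + 1)]
  apply mul_left_cancel₀ (by positivity : ((n + 1) * (2 * n + 3) : ℚ) ≠ 0)
  simp only [evenCatalanConv, Nat.cast_sum, Nat.cast_mul] at split ⊢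
  rw [split]
  linear_combination telescope

theorem evenCatalanConv_eq_four_pow_mul_catalan (m : ℕ) :
    evenCatalanConv m = 4 ^ m * catalan m := by
  induction m with
  | zero => simp [evenCatalanConv]
  | succ n ih =>
    have h := add_two_mul_evenCatalanConv_succ n
    rw [ih] at h
    qify
    apply mul_left_cancel₀ (by positivity : ((n : ℚ) + 2) ≠ 0)
    rw [h, catalan_succ_eq_mul_catalan]
    field_simp
    push_cast
    ring

theorem Finset.sum_range_two_mul_add_one {M : Type*} [AddCommMonoid M] (f : ℕ → M) (N : ℕ) :
    ∑ k ∈ range (2 * N + 1), f k =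
      ∑ j ∈ range (N + 1), f (2 * j) + ∑ j ∈ range N, f (2 * j + 1) := by
  induction N with
  | zero => simp
  | succ N ih =>
    rw [show 2 * (N + 1) + 1 = 2 * N + 1 + 1 + 1 by ring, sum_range_succ, sum_range_succ, ih,
      sum_range_succ (fun j => f (2 * j)) (N + 1), sum_range_succ (fun j => f (2 * j + 1)) N,
      show 2 * N + 1 + 1 = 2 * (N + 1) by ring]
    abel

theorem sum_catalan_odd_mul_add_four_pow_mul_catalan (m : ℕ) :
    ∑ j ∈ range (m + 1), catalan (2 * j + 1) * catalan (2 * (m - j) + 1) +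
      4 ^ (m + 1) * catalan (m + 1) = catalan (2 * m + 3) := by
  rw [show 2 * m + 3 = 2 * m + 2 + 1 by ring, catalan_succ' (2 * m + 2),
    Nat.sum_antidiagonal_eq_sum_range_succ (fun a b => catalan a * catalan b),
    Nat.succ_eq_add_one, show 2 * m + 2 + 1 = 2 * (m + 1) + 1 by ring,
    Finset.sum_range_two_mul_add_one, ← evenCatalanConv_eq_four_pow_mul_catalan, evenCatalanConv,
    add_comm]
  congr 1 <;> refine sum_congr rfl fun j hj => ?_ <;> rw [mem_range] at hj <;>
    congr 2 <;> omega

theorem catalan_avoid_odd01 (n : ℕ) (hn : 2 ≤ n) :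
    (catalan (2 * n - 1) : ℤ) -
        ∑ i ∈ Finset.Icc 2 n, (catalan (2 * n - 2 * i + 1) : ℤ) * 2 * catalan (2 * i - 3) =
      2 ^ (2 * n - 1) * catalan (n - 1) - catalan (2 * n - 1) := by
  obtain ⟨m, rfl⟩ := Nat.exists_eq_add_of_le' hn
  have reindex : ∑ i ∈ Finset.Icc 2 (m + 2), (catalan (2 * (m + 2) - 2 * i + 1) : ℤ) * 2 *
      catalan (2 * i - 3) =
      2 * ∑ j ∈ range (m + 1), (catalan (2 * j + 1) * catalan (2 * (m - j) + 1) : ℤ) := by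
    rw [← Ico_add_one_right_eq_Icc, sum_Ico_eq_sum_range, mul_sum]
    refine sum_congr rfl fun j hj => ?_
    rw [mem_range] at hj
    rw [show 2 * (m + 2) - 2 * (2 + j) + 1 = 2 * (m - j) + 1 by omega,
      show 2 * (2 + j) - 3 = 2 * j + 1 by omega]
    ring
  have odd_conv := sum_catalan_odd_mul_add_four_pow_mul_catalan m
  zify at odd_conv
  rw [reindex, show 2 * (m + 2) - 1 = 2 * m + 3 by omega, show m + 2 - 1 = m + 1 by omega,
    show (2 : ℤ) ^ (2 * m + 3) = 2 * 4 ^ (m + 1) by rw [pow_add, pow_mul]; norm_num; ring]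
  linear_combination -2 * odd_conv
end

section
/- For all n ≥ 1, ∑_{i=1}^{n-1} C_{2i-1} * C_{2n-2i-1} = C_{2n-1} - 4^{n-1} * C_{n-1}, where C_m denotes the m-th Catalan number. -/
open Finset

private def cq (m : ℕ) : ℚ := catalan m

private lemma catalan_rec (m : ℕ) :
    (m + 2) * catalan (m + 1) = (4 * m + 2) * catalan m := by
  have h1 := succ_mul_catalan_eq_centralBinom (m + 1)
  have h2 := Nat.succ_mul_centralBinom_succ m
  have h3 := succ_mul_catalan_eq_centralBinom m
  apply Nat.eq_of_mul_eq_mul_left (show 0 < m + 1 by omega)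
  calc (m + 1) * ((m + 2) * catalan (m + 1))
      = (m + 1 + 1) * catalan (m + 1) * (m + 1) := by ring
    _ = (m + 1) * Nat.centralBinom (m + 1) := by rw [h1]; ring
    _ = 2 * (2 * m + 1) * Nat.centralBinom m := h2
    _ = 2 * (2 * m + 1) * ((m + 1) * catalan m) := by rw [h3]
    _ = (m + 1) * ((4 * m + 2) * catalan m) := by ring

private lemma cq_rec (m : ℕ) :
    ((m : ℚ) + 2) * cq (m + 1) = (4 * m + 2) * cq m := by
  have h := congrArg (Nat.cast : ℕ → ℚ) (catalan_rec m)
  push_cast at h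
  simpa [cq] using h

private lemma cq_succ (m : ℕ) :
    cq (m + 1) = (4 * (m : ℚ) + 2) / ((m : ℚ) + 2) * cq m := by
  have hm : ((m : ℚ) + 2) ≠ 0 := by positivity
  rw [div_mul_eq_mul_div, eq_div_iff hm]
  linarith [cq_rec m]

private def gq (k u : ℕ) : ℚ :=
  -(2 * (k : ℚ) * (2 * (k : ℚ) + 1) * ((k : ℚ) + 3 * (u : ℚ) + 4) * (4 * (u : ℚ) + 1) *
        (4 * (u : ℚ) + 3)) /
      (((k : ℚ) + (u : ℚ) + 1) * (2 * ((k : ℚ) + (u : ℚ)) + 3) * ((u : ℚ) + 1) *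
        (2 * (u : ℚ) + 3)) *
    cq (2 * k) * cq (2 * u)

private lemma gq_zero_left (u : ℕ) : gq 0 u = 0 := by
  simp [gq]

private lemma step (k v : ℕ) :
    ((k : ℚ) + v + 3) * cq (2 * k) * cq (2 * v + 4)
      - (16 * ((k : ℚ) + v + 1) + 8) * cq (2 * k) * cq (2 * v + 2)
      = gq (k + 1) v - gq k (v + 1) := by
  have e1 := cq_succ (2 * v)
  have e2 := cq_succ (2 * v + 1)
  have e3 := cq_succ (2 * v + 2)
  have e4 := cq_succ (2 * v + 3)
  have e5 := cq_succ (2 * k)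
  have e6 := cq_succ (2 * k + 1)
  push_cast at e1 e2 e3 e4 e5 e6
  simp only [gq]
  rw [show 2 * (k + 1) = 2 * k + 1 + 1 by ring, show 2 * (v + 1) = 2 * v + 1 + 1 by ring,
    show 2 * v + 4 = 2 * v + 3 + 1 by ring]
  rw [e6, e5, e4, e2]
  rw [show 2 * v + 3 = 2 * v + 2 + 1 by ring]
  rw [e3]
  rw [show 2 * v + 2 = 2 * v + 1 + 1 by ring]
  rw [e2, e1]
  push_cast
  have h1 : (2 * (v : ℚ) + 2) ≠ 0 := by positivity
  have h2 : (2 * (v : ℚ) + 3) ≠ 0 := by positivity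
  have h3 : (2 * (v : ℚ) + 4) ≠ 0 := by positivity
  have h4 : (2 * (v : ℚ) + 5) ≠ 0 := by positivity
  have h5 : (2 * (k : ℚ) + 2) ≠ 0 := by positivity
  have h6 : (2 * (k : ℚ) + 3) ≠ 0 := by positivity
  have h7 : ((k : ℚ) + (v : ℚ) + 2) ≠ 0 := by positivity
  have h8 : (2 * ((k : ℚ) + (v : ℚ)) + 5) ≠ 0 := by positivity
  have h9 : ((v : ℚ) + 1) ≠ 0 := by positivity
  have h10 : ((v : ℚ) + 2) ≠ 0 := by positivity
  have h11 : ((k : ℚ) + 1 + (v : ℚ) + 1) ≠ 0 := by positivity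
  have h12 : (2 * ((k : ℚ) + 1 + (v : ℚ)) + 3) ≠ 0 := by positivity
  have h13 : ((k : ℚ) + ((v : ℚ) + 1) + 1) ≠ 0 := by positivity
  have h14 : (2 * ((k : ℚ) + ((v : ℚ) + 1)) + 3) ≠ 0 := by positivity
  field_simp
  ring

private lemma boundary (n : ℕ) :
    gq n 0 + ((n : ℚ) + 2) * cq (2 * n) * cq 2 - (16 * (n : ℚ) + 8) * cq (2 * n) * cq 0
      + ((n : ℚ) + 2) * cq (2 * n + 2) = 0 := by
  have e1 := cq_succ (2 * n)
  have e2 := cq_succ (2 * n + 1)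
  push_cast at e1 e2
  have c0 : cq 0 = 1 := by simp [cq]
  have c2 : cq 2 = 2 := by simp [cq, catalan_two]
  simp only [gq, c0, c2]
  rw [show 2 * n + 2 = 2 * n + 1 + 1 by ring, e2, e1]
  push_cast
  have h1 : (2 * (n : ℚ) + 2) ≠ 0 := by positivity
  have h2 : (2 * (n : ℚ) + 3) ≠ 0 := by positivity
  have h3 : ((n : ℚ) + 1) ≠ 0 := by positivity
  have h4 : (2 * ((n : ℚ) + 0) + 3) ≠ 0 := by positivity
  have h5 : ((n : ℚ) + 0 + 1) ≠ 0 := by positivity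
  field_simp
  ring

private def Sq (n : ℕ) : ℚ := ∑ k ∈ range (n + 1), cq (2 * k) * cq (2 * (n - k))

private lemma Sq_rec (n : ℕ) :
    ((n : ℚ) + 2) * Sq (n + 1) = (16 * (n : ℚ) + 8) * Sq n := by
  have tel : ∑ k ∈ range n, (gq (k + 1) (n - (k + 1)) - gq k (n - k)) = gq n 0 - gq 0 n := by
    simpa using sum_range_sub (fun k => gq k (n - k)) n
  have hsum : ∑ k ∈ range n,
      (((n : ℚ) + 2) * cq (2 * k) * cq (2 * (n + 1 - k))
        - (16 * (n : ℚ) + 8) * cq (2 * k) * cq (2 * (n - k)))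
      = gq n 0 := by
    rw [show gq n 0 = gq n 0 - gq 0 n by rw [gq_zero_left]; ring, ← tel]
    refine sum_congr rfl fun k hk => ?_
    rw [mem_range] at hk
    obtain ⟨v, rfl⟩ : ∃ v, n = k + v + 1 := ⟨n - k - 1, by omega⟩
    have i1 : 2 * (k + v + 1 + 1 - k) = 2 * v + 4 := by omega
    have i2 : 2 * (k + v + 1 - k) = 2 * v + 2 := by omega
    have i3 : k + v + 1 - (k + 1) = v := by omega
    have i4 : k + v + 1 - k = v + 1 := by omega
    rw [i1, i2, i3, i4]
    have := step k v
    push_cast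
    linear_combination this
  have expand : ((n : ℚ) + 2) * Sq (n + 1) - (16 * (n : ℚ) + 8) * Sq n
      = (∑ k ∈ range n,
          (((n : ℚ) + 2) * cq (2 * k) * cq (2 * (n + 1 - k))
            - (16 * (n : ℚ) + 8) * cq (2 * k) * cq (2 * (n - k))))
        + (((n : ℚ) + 2) * cq (2 * n) * cq 2 - (16 * (n : ℚ) + 8) * cq (2 * n) * cq 0)
        + ((n : ℚ) + 2) * cq (2 * n + 2) := by
    simp only [Sq]
    rw [sum_range_succ (fun k => cq (2 * k) * cq (2 * (n + 1 - k))) (n + 1),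
      sum_range_succ (fun k => cq (2 * k) * cq (2 * (n + 1 - k))) n,
      sum_range_succ (fun k => cq (2 * k) * cq (2 * (n - k))) n]
    have i1 : n + 1 - (n + 1) = 0 := by omega
    have i2 : n + 1 - n = 1 := by omega
    have i3 : n - n = 0 := by omega
    have i4 : 2 * (n + 1) = 2 * n + 2 := by ring
    simp only [i1, i2, i3, i4, mul_zero, mul_one]
    have c0 : cq 0 = 1 := by simp [cq]
    rw [c0, sum_sub_distrib]
    simp only [mul_assoc]
    rw [← mul_sum, ← mul_sum]
    ring
  have hb := boundary n
  have : ((n : ℚ) + 2) * Sq (n + 1) - (16 * (n : ℚ) + 8) * Sq n = 0 := by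
    rw [expand, hsum]
    linarith [hb]
  linarith [this]

private lemma shapiro_q (n : ℕ) : Sq n = 4 ^ n * cq n := by
  induction n with
  | zero => simp [Sq, cq]
  | succ n ih =>
    have hn : ((n : ℚ) + 2) ≠ 0 := by positivity
    apply mul_left_cancel₀ hn
    rw [Sq_rec n, ih]
    have hrec := cq_rec n
    linear_combination (-4 * (4 : ℚ) ^ n) * hrec

private lemma shapiro_nat (n : ℕ) :
    ∑ k ∈ range (n + 1), catalan (2 * k) * catalan (2 * (n - k)) = 4 ^ n * catalan n := by
  have h : ((∑ k ∈ range (n + 1), catalan (2 * k) * catalan (2 * (n - k)) : ℕ) : ℚ)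
      = ((4 ^ n * catalan n : ℕ) : ℚ) := by
    push_cast
    simpa [Sq, cq] using shapiro_q n
  exact_mod_cast h

private lemma sum_split (F : ℕ → ℤ) (m : ℕ) :
    ∑ j ∈ range (2 * m + 1), F j
      = ∑ a ∈ range (m + 1), F (2 * a) + ∑ a ∈ range m, F (2 * a + 1) := by
  induction m with
  | zero => simp
  | succ m ih =>
    rw [show 2 * (m + 1) + 1 = (2 * m + 1) + 1 + 1 by ring, sum_range_succ, sum_range_succ, ih,
      sum_range_succ (fun a => F (2 * a)) (m + 1), sum_range_succ (fun a => F (2 * a + 1)) m]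
    rw [show 2 * (m + 1) = 2 * m + 1 + 1 by ring]
    ring

theorem catalan_odd_convolution (n : ℕ) (hn : 1 ≤ n) :
    ∑ i ∈ Finset.Icc 1 (n - 1), (catalan (2 * i - 1) : ℤ) * catalan (2 * n - 2 * i - 1) =
      (catalan (2 * n - 1) : ℤ) - 4 ^ (n - 1) * catalan (n - 1) := by
  obtain ⟨m, rfl⟩ : ∃ m, n = m + 1 := ⟨n - 1, by omega⟩
  simp only [Nat.add_sub_cancel]
  have hcat : (catalan (2 * m + 1) : ℤ)
      = ∑ j ∈ range (2 * m + 1), (catalan j : ℤ) * catalan (2 * m - j) := by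
    rw [catalan_succ (2 * m), ← Finset.sum_range (fun j => catalan j * catalan (2 * m - j))]
    push_cast
    rfl
  have hsplit := sum_split (fun j => (catalan j : ℤ) * catalan (2 * m - j)) m
  have heven : ∑ a ∈ range (m + 1), (catalan (2 * a) : ℤ) * catalan (2 * m - 2 * a)
      = 4 ^ m * catalan m := by
    have h1 : ∑ a ∈ range (m + 1), (catalan (2 * a) : ℤ) * catalan (2 * m - 2 * a)
        = ((∑ a ∈ range (m + 1), catalan (2 * a) * catalan (2 * (m - a)) : ℕ) : ℤ) := by
      push_cast
      refine sum_congr rfl fun a ha => ?_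
      rw [mem_range] at ha
      have h2 : 2 * m - 2 * a = 2 * (m - a) := by omega
      rw [h2]
    rw [h1, shapiro_nat m]
    push_cast
    ring
  have hlhs : ∑ i ∈ Finset.Icc 1 m, (catalan (2 * i - 1) : ℤ) * catalan (2 * (m + 1) - 2 * i - 1)
      = ∑ a ∈ range m, (catalan (2 * a + 1) : ℤ) * catalan (2 * m - (2 * a + 1)) := by
    rw [← Finset.Ico_add_one_right_eq_Icc, Finset.sum_Ico_eq_sum_range,
      show m + 1 - 1 = m from rfl]
    refine sum_congr rfl fun a ha => ?_
    rw [mem_range] at ha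
    have i1 : 2 * (1 + a) - 1 = 2 * a + 1 := by omega
    have i2 : 2 * (m + 1) - 2 * (1 + a) - 1 = 2 * m - (2 * a + 1) := by omega
    rw [i1, i2]
  have h2m1 : 2 * (m + 1) - 1 = 2 * m + 1 := by omega
  rw [h2m1, hlhs, hcat, hsplit, heven]
  ring
end

section
/- Define h(n) recursively by h(n) = C_{2n-2} + ∑_{i=1}^{n-1} h(i) * 2 * C_{2n-2i-1} for n ≥ 1 (so h(1) = C_0 = 1). Then h(n) = 4^{n-1} * C_{n-1} for all n ≥ 1, where C_m denotes the m-th Catalan number. -/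
/-!
Let `c = ∑ Cₙ Xⁿ`, so that `c = 1 + X c²`, and split `c(X) = E(X²) + X O(X²)`. Comparing even and
odd parts of `c = 1 + X c²` gives `E = 1 + 2XEO` and `O = E² + XO²`, whence `E²` solves
`G = 1 + 4XG²`, as does `c(4X) = ∑ 4ⁿCₙXⁿ`. So `c(4X) = E² = E + 2X E² O`, and comparing
coefficients shows that `n ↦ 4ⁿ⁻¹Cₙ₋₁` satisfies the recursion defining `h`.
-/

open PowerSeries Finset

theorem Finset.Nat.sum_antidiagonal_filter_mod_two {M : Type*} [AddCommMonoid M]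
    (f : ℕ × ℕ → M) {N n r s : ℕ} (hr : r < 2) (hs : s < 2) (hN : N = 2 * n + r + s) :
    ∑ p ∈ antidiagonal N with p.1 % 2 = r, f p =
      ∑ p ∈ antidiagonal n, f (2 * p.1 + r, 2 * p.2 + s) := by
  subst hN
  symm
  refine sum_nbij' (fun p => (2 * p.1 + r, 2 * p.2 + s)) (fun p => (p.1 / 2, p.2 / 2))
    ?_ ?_ ?_ ?_ fun _ _ => rfl
  all_goals
    intro p hp
    simp only [mem_filter, HasAntidiagonal.mem_antidiagonal, Prod.ext_iff] at hp ⊢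
    omega

namespace PowerSeries

variable {R : Type*} [CommSemiring R]

-- `f(X) = evenPart f (X²) + X * oddPart f (X²)`
noncomputable def evenPart (f : R⟦X⟧) : R⟦X⟧ := mk fun n => coeff (2 * n) f

noncomputable def oddPart (f : R⟦X⟧) : R⟦X⟧ := mk fun n => coeff (2 * n + 1) f

@[simp] theorem coeff_evenPart (f : R⟦X⟧) (n : ℕ) : coeff n (evenPart f) = coeff (2 * n) f :=
  coeff_mk _ _

@[simp] theorem coeff_oddPart (f : R⟦X⟧) (n : ℕ) : coeff n (oddPart f) = coeff (2 * n + 1) f :=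
  coeff_mk _ _

theorem evenPart_add (f g : R⟦X⟧) : evenPart (f + g) = evenPart f + evenPart g := by
  ext; simp

theorem oddPart_add (f g : R⟦X⟧) : oddPart (f + g) = oddPart f + oddPart g := by
  ext; simp

@[simp] theorem evenPart_one : evenPart (1 : R⟦X⟧) = 1 := by
  ext n; simp [coeff_one]

@[simp] theorem oddPart_one : oddPart (1 : R⟦X⟧) = 0 := by
  ext n; simp [coeff_one]

theorem evenPart_X_mul (f : R⟦X⟧) : evenPart (X * f) = X * oddPart f := by
  ext (_ | n)
  · simp
  · rw [coeff_evenPart, show 2 * (n + 1) = 2 * n + 1 + 1 by ring, coeff_succ_X_mul,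
      coeff_succ_X_mul, coeff_oddPart]

theorem oddPart_X_mul (f : R⟦X⟧) : oddPart (X * f) = evenPart f := by
  ext n; simp [coeff_succ_X_mul]

theorem evenPart_mul (f g : R⟦X⟧) :
    evenPart (f * g) = evenPart f * evenPart g + X * (oddPart f * oddPart g) := by
  ext (_ | n)
  · rw [coeff_evenPart, map_add, coeff_zero_X_mul, add_zero, coeff_mul, coeff_mul]
    simp
  rw [coeff_evenPart, coeff_mul, ← sum_filter_add_sum_filter_not _ (fun p => p.1 % 2 = 0)]
  simp only [Nat.mod_two_ne_zero]
  rw [Nat.sum_antidiagonal_filter_mod_two _ (n := n + 1) (r := 0) (s := 0) (by norm_num)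
      (by norm_num) (by ring),
    Nat.sum_antidiagonal_filter_mod_two _ (n := n) (r := 1) (s := 1) (by norm_num) (by norm_num)
      (by ring),
    map_add, coeff_succ_X_mul, coeff_mul, coeff_mul]
  simp

theorem oddPart_mul (f g : R⟦X⟧) :
    oddPart (f * g) = evenPart f * oddPart g + oddPart f * evenPart g := by
  ext n
  rw [coeff_oddPart, coeff_mul, ← sum_filter_add_sum_filter_not _ (fun p => p.1 % 2 = 0)]
  simp only [Nat.mod_two_ne_zero]
  rw [Nat.sum_antidiagonal_filter_mod_two _ (n := n) (r := 0) (s := 1) (by norm_num) (by norm_num)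
      (by ring),
    Nat.sum_antidiagonal_filter_mod_two _ (n := n) (r := 1) (s := 0) (by norm_num) (by norm_num)
      (by ring),
    map_add, coeff_mul, coeff_mul]
  simp

theorem eq_of_eq_one_add_C_mul_X_mul_sq {a : R} {f g : R⟦X⟧} (hf : f = 1 + C a * X * f ^ 2)
    (hg : g = 1 + C a * X * g ^ 2) : f = g := by
  ext n
  induction n using Nat.strong_induction_on with
  | _ n ih =>
    rw [hf, hg]
    rcases n with _ | n
    · simp
    · simp only [map_add, mul_assoc, coeff_C_mul, coeff_succ_X_mul]
      rw [pow_two, pow_two, coeff_mul, coeff_mul]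
      congr 2
      refine sum_congr rfl fun p hp => ?_
      rw [HasAntidiagonal.mem_antidiagonal] at hp
      rw [ih p.1 (by omega), ih p.2 (by omega)]

end PowerSeries

variable (R : Type*)

section CommSemiring

variable [CommSemiring R]

noncomputable def catalanSeries : R⟦X⟧ := mk fun n => (catalan n : R)

@[simp] theorem coeff_catalanSeries (n : ℕ) : coeff n (catalanSeries R) = catalan n :=
  coeff_mk _ _

theorem catalanSeries_eq : catalanSeries R = 1 + X * catalanSeries R ^ 2 := by
  ext (_ | n)
  · simp
  · rw [map_add, coeff_succ_X_mul, pow_two, coeff_mul, coeff_catalanSeries, catalan_succ']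
    simp [coeff_one]

theorem evenPart_catalanSeries :
    evenPart (catalanSeries R) =
      1 + 2 * X * (evenPart (catalanSeries R) * oddPart (catalanSeries R)) := by
  conv_lhs => rw [catalanSeries_eq]
  rw [evenPart_add, evenPart_one, evenPart_X_mul, pow_two, oddPart_mul]
  ring

theorem oddPart_catalanSeries :
    oddPart (catalanSeries R) =
      evenPart (catalanSeries R) ^ 2 + X * oddPart (catalanSeries R) ^ 2 := by
  conv_lhs => rw [catalanSeries_eq]
  rw [oddPart_add, oddPart_one, oddPart_X_mul, pow_two, evenPart_mul]
  ring

end CommSemiring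

section CommRing

variable [CommRing R]

theorem sq_evenPart_catalanSeries :
    evenPart (catalanSeries R) ^ 2 = rescale 4 (catalanSeries R) := by
  apply eq_of_eq_one_add_C_mul_X_mul_sq (a := 4)
  · have hE := evenPart_catalanSeries R
    have hO := oddPart_catalanSeries R
    set E := evenPart (catalanSeries R)
    set O := oddPart (catalanSeries R)
    rw [map_ofNat]
    linear_combination (E + 1 - 2 * X * E * O) * hE + 4 * X * E ^ 2 * hO
  · conv_lhs => rw [catalanSeries_eq]
    rw [map_add, map_one, map_mul, map_pow, rescale_X, mul_assoc]

theorem rescale_four_catalanSeries :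
    rescale 4 (catalanSeries R) = evenPart (catalanSeries R) +
      2 * X * (rescale 4 (catalanSeries R) * oddPart (catalanSeries R)) := by
  linear_combination evenPart (catalanSeries R) * evenPart_catalanSeries R -
    (1 - 2 * X * oddPart (catalanSeries R)) * sq_evenPart_catalanSeries R

end CommRing

theorem four_pow_mul_catalan_succ (m : ℕ) :
    4 ^ (m + 1) * catalan (m + 1) = catalan (2 * (m + 1)) +
      2 * ∑ p ∈ antidiagonal m, 4 ^ p.1 * catalan p.1 * catalan (2 * p.2 + 1) := by
  have h := congrArg (coeff (m + 1)) (rescale_four_catalanSeries ℤ)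
  rw [show (2 : ℤ⟦X⟧) = C 2 from (map_ofNat C 2).symm, mul_assoc, map_add, coeff_C_mul,
    coeff_succ_X_mul, coeff_mul] at h
  simp only [coeff_rescale, coeff_evenPart, coeff_oddPart, coeff_catalanSeries] at h
  exact_mod_cast h

theorem four_pow_mul_catalan_eq_sum_Icc {n : ℕ} (hn : 1 ≤ n) :
    4 ^ (n - 1) * catalan (n - 1) = catalan (2 * n - 2) +
      ∑ i ∈ Icc 1 (n - 1), 4 ^ (i - 1) * catalan (i - 1) * 2 * catalan (2 * n - 2 * i - 1) := by
  obtain ⟨_ | m, rfl⟩ := Nat.exists_eq_add_of_le' hn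
  · simp
  rw [Nat.add_sub_cancel, four_pow_mul_catalan_succ,
    show 2 * (m + 1 + 1) - 2 = 2 * (m + 1) by omega, mul_sum]
  congr 1
  refine sum_nbij' (fun p => p.1 + 1) (fun i => (i - 1, m + 1 - i)) ?_ ?_ ?_ ?_ fun p hp => ?_
  iterate 4
    intro p hp
    simp only [mem_Icc, HasAntidiagonal.mem_antidiagonal, Prod.ext_iff] at hp ⊢
    omega
  rw [HasAntidiagonal.mem_antidiagonal] at hp
  rw [show 2 * (m + 1 + 1) - 2 * (p.1 + 1) - 1 = 2 * p.2 + 1 by omega, Nat.add_sub_cancel]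
  ring

theorem marked_triangulation_count (h : ℕ → ℕ)
    (hrec : ∀ n : ℕ, 1 ≤ n →
      h n = catalan (2 * n - 2) +
        ∑ i ∈ Finset.Icc 1 (n - 1), h i * 2 * catalan (2 * n - 2 * i - 1)) :
    ∀ n : ℕ, 1 ≤ n → h n = 4 ^ (n - 1) * catalan (n - 1) := by
  intro n
  induction n using Nat.strong_induction_on with
  | _ n ih =>
    intro hn
    rw [hrec n hn, four_pow_mul_catalan_eq_sum_Icc hn]
    congr 1
    refine sum_congr rfl fun i hi => ?_
    rw [mem_Icc] at hi
    rw [ih i (by omega) hi.1]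
end

section
/- For all n ≥ 1, the number of triangulations of a convex (2n+2)-gon with vertices labeled 0, 1, ..., 2n+1 that contain none of the diagonals {i, 2n+3-i mod (2n+2)} for 2 ≤ i ≤ n (i.e., no diagonal parallel to the side {0,1}) equals 2 * C_{2n-1}, where C_m denotes the m-th Catalan number. -/
/-- `e` is a diagonal of a convex `m`-gon with vertices `0, …, m-1`:
an ordered pair `(a, b)` with `a < b < m` joining two non-adjacent vertices. -/
def IsPolygonDiagonal (m : ℕ) (e : ℕ × ℕ) : Prop :=
  e.1 < e.2 ∧ e.2 < m ∧ e.1 + 2 ≤ e.2 ∧ ¬(e.1 = 0 ∧ e.2 = m - 1)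

/-- Two diagonals (each given as an increasing pair) of a convex polygon cross
in their interiors. -/
def DiagonalsCross (e f : ℕ × ℕ) : Prop :=
  (e.1 < f.1 ∧ f.1 < e.2 ∧ e.2 < f.2) ∨ (f.1 < e.1 ∧ e.1 < f.2 ∧ f.2 < e.2)

/-- A triangulation of a convex `m`-gon: a (maximal) set of `m - 3` pairwise
non-crossing diagonals. -/
def IsTriangulation (m : ℕ) (T : Finset (ℕ × ℕ)) : Prop :=
  (∀ e ∈ T, IsPolygonDiagonal m e) ∧
  (∀ e ∈ T, ∀ f ∈ T, ¬ DiagonalsCross e f) ∧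
  T.card = m - 3

/-
Cutting a triangulation along one of its diagonals gives triangulations of the two sides, and
conversely; together with the triangle on a fixed side this yields the Catalan recursion for the
number of triangulations of any convex polygon. Let `g i` count the triangulations avoiding the
chords `(l, 2n+3-l)` of the `2i`-gon that the chord `(i, 2n+3-i)` cuts off on the side of `{0, 1}`.
Sorting all `C (2i-2)` triangulations of this polygon by the first chord `(j, 2n+3-j)` they contain
gives `C (2i-2) = g i + ∑_{2 ≤ j < i} C (2(i-j)) * g j`, which the parity identity
`C (2t+2) = 2 ∑_{s ≤ t} C (2s+1) * C (2(t-s))` solves by `g i = 2 C (2i-3)`.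
-/

open Finset

theorem Finset.sum_range_two_mul {M : Type*} [AddCommMonoid M] (f : ℕ → M) (t : ℕ) :
    ∑ k ∈ range (2 * t), f k = ∑ s ∈ range t, (f (2 * s) + f (2 * s + 1)) := by
  induction t with
  | zero => simp
  | succ t ih => rw [mul_add_one, sum_range_succ, sum_range_succ, sum_range_succ, ih, add_assoc]

/-- Pairing each odd-indexed term of the Catalan convolution with its mirror image. -/
theorem catalan_two_mul_add_two_s13 (t : ℕ) :
    catalan (2 * t + 2) = 2 * ∑ s ∈ range (t + 1), catalan (2 * s + 1) * catalan (2 * (t - s)) := by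
  have heven : ∑ s ∈ range (t + 1), catalan (2 * s) * catalan (2 * t + 1 - 2 * s) =
      ∑ s ∈ range (t + 1), catalan (2 * s + 1) * catalan (2 * (t - s)) := by
    rw [← sum_range_reflect]
    refine sum_congr rfl fun s hs ↦ ?_
    rw [mem_range] at hs
    rw [mul_comm]
    congr 2
    omega
  have hodd : ∑ s ∈ range (t + 1), catalan (2 * s + 1) * catalan (2 * t + 1 - (2 * s + 1)) =
      ∑ s ∈ range (t + 1), catalan (2 * s + 1) * catalan (2 * (t - s)) :=
    sum_congr rfl fun s _ ↦ by congr 2; omega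
  rw [catalan_succ, Fin.sum_univ_eq_sum_range (fun k ↦ catalan k * catalan (2 * t + 1 - k)),
    Nat.succ_eq_add_one, show 2 * t + 1 + 1 = 2 * (t + 1) by ring, sum_range_two_mul,
    sum_add_distrib, heven, hodd, two_mul]

namespace ConvexPolygon

variable {S S' : Finset ℕ} {T T₁ T₂ : Finset (ℕ × ℕ)} {e f : ℕ × ℕ} {a b x y : ℕ}

/-- `e` is a diagonal of the convex polygon whose vertices, in cyclic order, are the elements of
`S` in increasing order. -/
def IsDiagonalOf (S : Finset ℕ) (e : ℕ × ℕ) : Prop :=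
  e.1 ∈ S ∧ e.2 ∈ S ∧ (∃ c ∈ S, e.1 < c ∧ c < e.2) ∧ ∃ c ∈ S, c < e.1 ∨ e.2 < c

def Noncrossing (T : Finset (ℕ × ℕ)) : Prop :=
  ∀ e ∈ T, ∀ f ∈ T, ¬ DiagonalsCross e f

def IsTriangulationOf (S : Finset ℕ) (T : Finset (ℕ × ℕ)) : Prop :=
  (∀ e ∈ T, IsDiagonalOf S e) ∧ Noncrossing T ∧ #T = #S - 3

open scoped Classical in
noncomputable def triangulations (S : Finset ℕ) : Finset (Finset (ℕ × ℕ)) :=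
  {T ∈ (S ×ˢ S).powerset | IsTriangulationOf S T}

/-- Cutting along the diagonal `(x, y)` splits the polygon `S` into `S ∩ Icc x y` and
`S \ Ioo x y`, and the diagonals of `T` other than `(x, y)` into `innerPart T x y` and
`outerPart T x y`. -/
def innerPart (T : Finset (ℕ × ℕ)) (x y : ℕ) : Finset (ℕ × ℕ) :=
  {f ∈ T | x ≤ f.1 ∧ f.2 ≤ y ∧ f ≠ (x, y)}

def outerPart (T : Finset (ℕ × ℕ)) (x y : ℕ) : Finset (ℕ × ℕ) :=
  {f ∈ T | ¬ (x ≤ f.1 ∧ f.2 ≤ y)}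

theorem diagonalsCross_comm : DiagonalsCross e f ↔ DiagonalsCross f e := by
  unfold DiagonalsCross; tauto

theorem Noncrossing.mono {T' : Finset (ℕ × ℕ)} (h : Noncrossing T) (hT' : T' ⊆ T) :
    Noncrossing T' :=
  fun e he f hf ↦ h e (hT' he) f (hT' hf)

theorem IsDiagonalOf.lt (h : IsDiagonalOf S e) : e.1 < e.2 := by
  obtain ⟨-, -, ⟨c, -, h1, h2⟩, -⟩ := h; omega

theorem IsDiagonalOf.mono (hS : S ⊆ S') (h : IsDiagonalOf S e) : IsDiagonalOf S' e := by
  obtain ⟨h1, h2, ⟨c, hc, hc'⟩, ⟨d, hd, hd'⟩⟩ := h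
  exact ⟨hS h1, hS h2, ⟨c, hS hc, hc'⟩, ⟨d, hS hd, hd'⟩⟩

theorem mem_triangulations : T ∈ triangulations S ↔ IsTriangulationOf S T := by
  simp only [triangulations, mem_filter, mem_powerset, and_iff_right_iff_imp]
  exact fun hT e he ↦ mem_product.2 ⟨(hT.1 e he).1, (hT.1 e he).2.1⟩

theorem isDiagonalOf_inter_Icc_iff (hx : x ∈ S) (hy : y ∈ S) :
    IsDiagonalOf (S ∩ Icc x y) f ↔ IsDiagonalOf S f ∧ x ≤ f.1 ∧ f.2 ≤ y ∧ f ≠ (x, y) := by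
  constructor
  · intro hf
    refine ⟨hf.mono inter_subset_left, ?_⟩
    obtain ⟨h1, h2, -, ⟨c, hc, hc'⟩⟩ := hf
    simp only [mem_inter, mem_Icc] at h1 h2 hc
    refine ⟨h1.2.1, h2.2.2, fun h ↦ ?_⟩
    subst h
    omega
  · rintro ⟨⟨h1, h2, ⟨c, hc, hc'⟩, -⟩, hx1, hy2, hne⟩
    have hlt : f.1 < f.2 := by omega
    have hout : x < f.1 ∨ f.2 < y := by
      by_contra! h
      exact hne (Prod.ext (by simp; omega) (by simp; omega))
    simp only [IsDiagonalOf, mem_inter, mem_Icc]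
    refine ⟨⟨h1, hx1, by omega⟩, ⟨h2, by omega, hy2⟩, ⟨c, ⟨hc, by omega, by omega⟩, hc'⟩, ?_⟩
    rcases hout with h | h
    · exact ⟨x, ⟨hx, le_rfl, by omega⟩, Or.inl h⟩
    · exact ⟨y, ⟨hy, by omega, le_rfl⟩, Or.inr h⟩

theorem isDiagonalOf_sdiff_Ioo_iff (hx : x ∈ S) (hy : y ∈ S) (hxy : x < y) :
    IsDiagonalOf (S \ Ioo x y) f ↔
      IsDiagonalOf S f ∧ ¬ DiagonalsCross (x, y) f ∧ ¬ (x ≤ f.1 ∧ f.2 ≤ y) := by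
  constructor
  · intro hf
    refine ⟨hf.mono sdiff_subset, ?_⟩
    obtain ⟨h1, h2, ⟨c, hc, hc'⟩, -⟩ := hf
    simp only [mem_sdiff, mem_Ioo] at h1 h2 hc
    unfold DiagonalsCross
    omega
  · rintro ⟨⟨h1, h2, ⟨c, hc, hc'⟩, ⟨d, hd, hd'⟩⟩, hcross, hnest⟩
    unfold DiagonalsCross at hcross
    simp only at hcross
    simp only [IsDiagonalOf, mem_sdiff, mem_Ioo]
    refine ⟨⟨h1, by omega⟩, ⟨h2, by omega⟩, ?_, ?_⟩
    · by_cases hcm : x < c ∧ c < y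
      · by_cases hx1 : f.1 < x
        · exact ⟨x, ⟨hx, by omega⟩, hx1, by omega⟩
        · exact ⟨y, ⟨hy, by omega⟩, by omega, by omega⟩
      · exact ⟨c, ⟨hc, hcm⟩, hc'⟩
    · by_cases hdisj : f.2 ≤ x ∨ y ≤ f.1
      · rcases hdisj with h | h
        · exact ⟨y, ⟨hy, by omega⟩, by omega⟩
        · exact ⟨x, ⟨hx, by omega⟩, by omega⟩
      · exact ⟨d, ⟨hd, by omega⟩, hd'⟩

theorem IsDiagonalOf.card_inter_Icc_add_card_sdiff_Ioo (h : IsDiagonalOf S (x, y)) :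
    #(S ∩ Icc x y) + #(S \ Ioo x y) = #S + 2 := by
  have hxy : x < y := h.lt
  obtain ⟨hx, hy, -⟩ := h
  have hunion : S ∩ Icc x y ∪ S \ Ioo x y = S := by
    ext c; simp only [mem_union, mem_inter, mem_sdiff, mem_Icc, mem_Ioo]; grind
  have hinter : S ∩ Icc x y ∩ (S \ Ioo x y) = {x, y} := by
    ext c; simp only [mem_inter, mem_sdiff, mem_Icc, mem_Ioo, mem_insert, mem_singleton]
    constructor
    · omega
    · rintro (rfl | rfl) <;> simp_all <;> omega
  rw [← card_union_add_card_inter, hunion, hinter, card_pair hxy.ne]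

theorem IsDiagonalOf.three_le_card_inter_Icc (h : IsDiagonalOf S (x, y)) :
    3 ≤ #(S ∩ Icc x y) := by
  obtain ⟨hx, hy, ⟨c, hc, hxc, hcy⟩, -⟩ := h
  simp only at hx hy hxc hcy
  refine two_lt_card.2 ⟨x, ?_, c, ?_, y, ?_, by omega, by omega, by omega⟩ <;>
    simp only [mem_inter, mem_Icc] <;> grind

theorem IsDiagonalOf.three_le_card_sdiff_Ioo (h : IsDiagonalOf S (x, y)) :
    3 ≤ #(S \ Ioo x y) := by
  have hxy := h.lt
  obtain ⟨hx, hy, -, ⟨d, hd, hd'⟩⟩ := h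
  simp only at hx hy hd' hxy
  refine two_lt_card.2 ⟨x, ?_, d, ?_, y, ?_, by omega, by omega, by omega⟩ <;>
    simp only [mem_sdiff, mem_Ioo] <;> grind

theorem card_innerPart_add_card_outerPart (h : (x, y) ∈ T) :
    #(innerPart T x y) + #(outerPart T x y) + 1 = #T := by
  have hin : innerPart T x y = {f ∈ T | x ≤ f.1 ∧ f.2 ≤ y}.erase (x, y) := by
    ext f; simp only [innerPart, mem_filter, mem_erase]; tauto
  have := card_erase_add_one (s := {f ∈ T | x ≤ f.1 ∧ f.2 ≤ y}) (a := (x, y)) (by simp [h])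
  have := card_filter_add_card_filter_not (s := T) (fun f ↦ x ≤ f.1 ∧ f.2 ≤ y)
  rw [hin, outerPart]
  omega

theorem isDiagonalOf_of_mem_innerPart (hT : ∀ e ∈ T, IsDiagonalOf S e) (hxy : (x, y) ∈ T)
    (hf : f ∈ innerPart T x y) : IsDiagonalOf (S ∩ Icc x y) f := by
  simp only [innerPart, mem_filter] at hf
  exact (isDiagonalOf_inter_Icc_iff (hT _ hxy).1 (hT _ hxy).2.1).2 ⟨hT f hf.1, hf.2⟩

theorem isDiagonalOf_of_mem_outerPart (hT : ∀ e ∈ T, IsDiagonalOf S e)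
    (hnc : Noncrossing T) (hxy : (x, y) ∈ T)
    (hf : f ∈ outerPart T x y) : IsDiagonalOf (S \ Ioo x y) f := by
  simp only [outerPart, mem_filter] at hf
  obtain ⟨hx, hy, -⟩ := hT _ hxy
  exact (isDiagonalOf_sdiff_Ioo_iff hx hy (hT _ hxy).lt).2 ⟨hT f hf.1, hnc _ hxy _ hf.1, hf.2⟩

theorem card_le_of_noncrossing (hT : ∀ e ∈ T, IsDiagonalOf S e)
    (hnc : Noncrossing T) : #T ≤ #S - 3 := by
  induction hS : #S using Nat.strong_induction_on generalizing S T with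
  | _ m ih =>
  obtain rfl | ⟨⟨x, y⟩, hxy⟩ := T.eq_empty_or_nonempty
  · simp
  have hdiag : IsDiagonalOf S (x, y) := hT _ hxy
  have hsum := hdiag.card_inter_Icc_add_card_sdiff_Ioo
  have h3in := hdiag.three_le_card_inter_Icc
  have h3out := hdiag.three_le_card_sdiff_Ioo
  have hin := ih _ (by omega) (fun f hf ↦ isDiagonalOf_of_mem_innerPart hT hxy hf)
    (hnc.mono (filter_subset _ _)) rfl
  have hout := ih _ (by omega) (fun f hf ↦ isDiagonalOf_of_mem_outerPart hT hnc hxy hf)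
    (hnc.mono (filter_subset _ _)) rfl
  have := card_innerPart_add_card_outerPart hxy
  omega

theorem IsTriangulationOf.parts (hT : IsTriangulationOf S T) (hxy : (x, y) ∈ T) :
    IsTriangulationOf (S ∩ Icc x y) (innerPart T x y) ∧
      IsTriangulationOf (S \ Ioo x y) (outerPart T x y) := by
  obtain ⟨hd, hnc, hcard⟩ := hT
  have hdiag : IsDiagonalOf S (x, y) := hd _ hxy
  have hin := fun f (hf : f ∈ innerPart T x y) ↦ isDiagonalOf_of_mem_innerPart hd hxy hf
  have hout := fun f (hf : f ∈ outerPart T x y) ↦ isDiagonalOf_of_mem_outerPart hd hnc hxy hf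
  have hnc_in : Noncrossing (innerPart T x y) := hnc.mono (filter_subset _ _)
  have hnc_out : Noncrossing (outerPart T x y) := hnc.mono (filter_subset _ _)
  have := card_le_of_noncrossing hin hnc_in
  have := card_le_of_noncrossing hout hnc_out
  have := hdiag.card_inter_Icc_add_card_sdiff_Ioo
  have := hdiag.three_le_card_inter_Icc
  have := hdiag.three_le_card_sdiff_Ioo
  have := card_innerPart_add_card_outerPart hxy
  exact ⟨⟨hin, hnc_in, by omega⟩, ⟨hout, hnc_out, by omega⟩⟩

theorem innerPart_insert_union (hxy : IsDiagonalOf S (x, y))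
    (h₁ : ∀ f ∈ T₁, IsDiagonalOf (S ∩ Icc x y) f) (h₂ : ∀ f ∈ T₂, IsDiagonalOf (S \ Ioo x y) f) :
    innerPart (insert (x, y) (T₁ ∪ T₂)) x y = T₁ := by
  ext f
  have hi := fun hf ↦ (isDiagonalOf_inter_Icc_iff hxy.1 hxy.2.1).1 (h₁ f hf)
  have ho := fun hf ↦ (isDiagonalOf_sdiff_Ioo_iff hxy.1 hxy.2.1 hxy.lt).1 (h₂ f hf)
  simp only [innerPart, mem_filter, mem_insert, mem_union]
  grind

theorem outerPart_insert_union (hxy : IsDiagonalOf S (x, y))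
    (h₁ : ∀ f ∈ T₁, IsDiagonalOf (S ∩ Icc x y) f) (h₂ : ∀ f ∈ T₂, IsDiagonalOf (S \ Ioo x y) f) :
    outerPart (insert (x, y) (T₁ ∪ T₂)) x y = T₂ := by
  ext f
  have hi := fun hf ↦ (isDiagonalOf_inter_Icc_iff hxy.1 hxy.2.1).1 (h₁ f hf)
  have ho := fun hf ↦ (isDiagonalOf_sdiff_Ioo_iff hxy.1 hxy.2.1 hxy.lt).1 (h₂ f hf)
  simp only [outerPart, mem_filter, mem_insert, mem_union]
  grind

theorem noncrossing_insert_union (hxy : IsDiagonalOf S (x, y))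
    (h₁ : ∀ f ∈ T₁, IsDiagonalOf (S ∩ Icc x y) f) (h₂ : ∀ f ∈ T₂, IsDiagonalOf (S \ Ioo x y) f)
    (hnc₁ : Noncrossing T₁) (hnc₂ : Noncrossing T₂) :
    Noncrossing (insert (x, y) (T₁ ∪ T₂)) := by
  have hi := fun f hf ↦ (isDiagonalOf_inter_Icc_iff hxy.1 hxy.2.1).1 (h₁ f hf)
  have ho := fun f hf ↦ (isDiagonalOf_sdiff_Ioo_iff hxy.1 hxy.2.1 hxy.lt).1 (h₂ f hf)
  have hends := fun f hf ↦ And.intro (h₂ f hf).1 (h₂ f hf).2.1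
  simp only [mem_sdiff, mem_Ioo] at hends
  intro e he f hf hcross
  simp only [mem_insert, mem_union] at he hf
  rcases he with rfl | he | he <;> rcases hf with rfl | hf | hf
  all_goals first
    | exact hnc₁ e he f hf hcross
    | exact hnc₂ e he f hf hcross
    | (unfold DiagonalsCross at hcross; grind)

theorem isTriangulationOf_insert_union (hxy : IsDiagonalOf S (x, y))
    (h₁ : IsTriangulationOf (S ∩ Icc x y) T₁) (h₂ : IsTriangulationOf (S \ Ioo x y) T₂) :
    IsTriangulationOf S (insert (x, y) (T₁ ∪ T₂)) := by
  refine ⟨?_, noncrossing_insert_union hxy h₁.1 h₂.1 h₁.2.1 h₂.2.1, ?_⟩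
  · simp only [mem_insert, mem_union]
    rintro e (rfl | he | he)
    exacts [hxy, (h₁.1 e he).mono inter_subset_left, (h₂.1 e he).mono sdiff_subset]
  · have := card_innerPart_add_card_outerPart (mem_insert_self (x, y) (T₁ ∪ T₂))
    rw [innerPart_insert_union hxy h₁.1 h₂.1, outerPart_insert_union hxy h₁.1 h₂.1] at this
    have := hxy.card_inter_Icc_add_card_sdiff_Ioo
    have := hxy.three_le_card_inter_Icc
    have := hxy.three_le_card_sdiff_Ioo
    have := h₁.2.2
    have := h₂.2.2
    omega

theorem insert_innerPart_union_outerPart (h : (x, y) ∈ T) :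
    insert (x, y) (innerPart T x y ∪ outerPart T x y) = T := by
  ext f
  simp only [innerPart, outerPart, mem_insert, mem_union, mem_filter]
  grind

theorem card_filter_mem_and_outerPart (hxy : IsDiagonalOf S (x, y))
    (R : Finset (ℕ × ℕ) → Prop) [DecidablePred R] :
    #{T ∈ triangulations S | (x, y) ∈ T ∧ R (outerPart T x y)} =
      #(triangulations (S ∩ Icc x y)) * #{T ∈ triangulations (S \ Ioo x y) | R T} := by
  rw [← card_product]
  refine card_nbij' (fun T ↦ (innerPart T x y, outerPart T x y))
    (fun p ↦ insert (x, y) (p.1 ∪ p.2)) ?_ ?_ ?_ ?_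
  · intro T hT
    simp only [mem_coe, mem_filter, mem_triangulations] at hT
    have := hT.1.parts hT.2.1
    simp [mem_triangulations, this, hT.2.2]
  · rintro ⟨T₁, T₂⟩ hp
    simp only [mem_coe, mem_product, mem_filter, mem_triangulations] at hp
    simp only [mem_coe, mem_filter, mem_triangulations, mem_insert_self, true_and,
      outerPart_insert_union hxy hp.1.1 hp.2.1.1]
    exact ⟨isTriangulationOf_insert_union hxy hp.1 hp.2.1, hp.2.2⟩
  · intro T hT
    simp only [mem_coe, mem_filter] at hT
    exact insert_innerPart_union_outerPart hT.2.1
  · rintro ⟨T₁, T₂⟩ hp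
    simp only [mem_coe, mem_product, mem_filter, mem_triangulations] at hp
    exact Prod.ext (innerPart_insert_union hxy hp.1.1 hp.2.1.1)
      (outerPart_insert_union hxy hp.1.1 hp.2.1.1)

theorem triangulations_eq_singleton_empty (hS : #S ≤ 3) : triangulations S = {∅} := by
  ext T
  simp only [mem_triangulations, mem_singleton]
  constructor
  · exact fun hT ↦ card_eq_zero.1 (by have := hT.2.2; omega)
  · rintro rfl
    exact ⟨by simp, by simp [Noncrossing], by simp; omega⟩

theorem IsTriangulationOf.mem_of_forall_not_cross (hT : IsTriangulationOf S T)
    (he : IsDiagonalOf S e) (h : ∀ f ∈ T, ¬ DiagonalsCross e f) : e ∈ T := by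
  by_contra heT
  have hnc : Noncrossing (insert e T) := by
    intro f hf g hg
    rw [mem_insert] at hf hg
    rcases hf with rfl | hf <;> rcases hg with rfl | hg
    · have := he.lt; unfold DiagonalsCross; omega
    · exact h g hg
    · exact fun hc ↦ h f hf (diagonalsCross_comm.1 hc)
    · exact hT.2.1 f hf g hg
  have := card_le_of_noncrossing (fun f hf ↦ (mem_insert.1 hf).elim (· ▸ he) (hT.1 f)) hnc
  rw [card_insert_of_notMem heT, hT.2.2] at this
  have := he.three_le_card_inter_Icc.trans (card_le_card inter_subset_left)
  omega

/-- The vertices `u < v` are joined in `T`: by a diagonal of `T` or by a side of the polygon. -/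
def Joined (S : Finset ℕ) (T : Finset (ℕ × ℕ)) (u v : ℕ) : Prop :=
  (u, v) ∈ T ∨ ∀ c ∈ S, c ≤ u ∨ v ≤ c

instance {u v : ℕ} : Decidable (Joined S T u v) := by
  unfold Joined; infer_instance

theorem card_filter_joined_and_outerPart (hx : x ∈ S) (hy : y ∈ S)
    (hout : ∃ c ∈ S, c < x ∨ y < c) (R : Finset (ℕ × ℕ) → Prop) [DecidablePred R] :
    #{T ∈ triangulations S | Joined S T x y ∧ R (outerPart T x y)} =
      #(triangulations (S ∩ Icc x y)) * #{T ∈ triangulations (S \ Ioo x y) | R T} := by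
  by_cases hmid : ∃ c ∈ S, x < c ∧ c < y
  · rw [← card_filter_mem_and_outerPart ⟨hx, hy, hmid, hout⟩]
    congr 1
    refine filter_congr fun T _ ↦ ?_
    obtain ⟨c, hc, hc'⟩ := hmid
    have : ¬ ∀ c ∈ S, c ≤ x ∨ y ≤ c := fun h ↦ by have := h c hc; omega
    simp only [Joined, this, or_false]
  · push Not at hmid
    have hside : #(S ∩ Icc x y) ≤ 3 := by
      refine (card_le_card (t := {x, y}) fun c hc ↦ ?_).trans (card_le_two.trans (by norm_num))
      simp only [mem_inter, mem_Icc] at hc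
      have := hmid c hc.1
      simp only [mem_insert, mem_singleton]
      omega
    have hS : S \ Ioo x y = S := sdiff_eq_self_of_disjoint <| disjoint_left.2 fun c hc hc' ↦ by
      have := hmid c hc; simp only [mem_Ioo] at hc'; omega
    rw [triangulations_eq_singleton_empty hside, card_singleton, one_mul, hS]
    congr 1
    refine filter_congr fun T hT ↦ ?_
    have hT' : outerPart T x y = T := filter_true_of_mem fun f hf ⟨h1, h2⟩ ↦ by
      obtain ⟨-, -, ⟨c, hc, hc'⟩, -⟩ := (mem_triangulations.1 hT).1 f hf
      have := hmid c hc
      omega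
    simp only [Joined, hT', and_iff_right_iff_imp]
    exact fun _ ↦ Or.inr fun c hc ↦ by have := hmid c hc; omega

theorem Noncrossing.le_of_joined_of_joined {a b k k' : ℕ} (hT : Noncrossing T) (hk : k ∈ S)
    (hk' : k' ∈ S) (hak : a < k) (hk'b : k' < b) (h : Joined S T k b) (h' : Joined S T a k') :
    k' ≤ k := by
  by_contra hlt
  rcases h with hkb | hkb <;> rcases h' with hak' | hak'
  · exact hT _ hak' _ hkb (Or.inl (by simp only; omega))
  · have := hak' k hk; omega
  · have := hkb k' hk'; omega
  · have := hkb k' hk'; omega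

theorem card_le_card_inter_Ioo_add_two (hS : S ⊆ Icc a b) : #S ≤ #(S ∩ Ioo a b) + 2 := by
  have hsub : S ⊆ insert a (insert b (S ∩ Ioo a b)) := fun c hc ↦ by
    simp only [mem_insert, mem_inter, mem_Ioo]
    have := mem_Icc.1 (hS hc)
    grind
  have := card_insert_le b (S ∩ Ioo a b)
  have := (card_le_card hsub).trans (card_insert_le _ _)
  omega

/-- The side `(a, b)` of the polygon lies in a triangle of `T`, with apex `k`. -/
theorem IsTriangulationOf.exists_apex (hT : IsTriangulationOf S T) (ha : a ∈ S) (hb : b ∈ S)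
    (hS : S ⊆ Icc a b) (h3 : 3 ≤ #S) :
    ∃ k ∈ S ∩ Ioo a b, Joined S T a k ∧ Joined S T k b := by
  have hne : (S ∩ Ioo a b).Nonempty :=
    card_pos.1 (by have := card_le_card_inter_Ioo_add_two hS; omega)
  set K := {k ∈ S ∩ Ioo a b | Joined S T a k}
  have hK : K.Nonempty := by
    refine ⟨(S ∩ Ioo a b).min' hne, mem_filter.2 ⟨min'_mem _ hne, Or.inr fun d hd ↦ ?_⟩⟩
    have := mem_Ioo.1 (mem_inter.1 (min'_mem _ hne)).2
    have := mem_Icc.1 (hS hd)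
    by_cases hd' : a < d ∧ d < b
    · exact Or.inr (min'_le _ d (mem_inter.2 ⟨hd, mem_Ioo.2 hd'⟩))
    · omega
  have hk := mem_filter.1 (K.max'_mem hK)
  set k := K.max' hK
  rw [mem_inter, mem_Ioo] at hk
  obtain ⟨⟨hkS, hak, hkb⟩, hjk⟩ := hk
  refine ⟨k, mem_inter.2 ⟨hkS, mem_Ioo.2 ⟨hak, hkb⟩⟩, hjk, ?_⟩
  by_contra hkb'
  simp only [Joined, not_or, not_forall, not_le] at hkb'
  obtain ⟨hkbT, d, hd, hkd, hdb⟩ := hkb'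
  refine hkbT (hT.mem_of_forall_not_cross ⟨hkS, hb, ⟨d, hd, hkd, hdb⟩, ⟨a, ha, Or.inl hak⟩⟩
    fun f hf hcross ↦ ?_)
  obtain ⟨hf1, hf2, -⟩ := hT.1 f hf
  have := mem_Icc.1 (hS hf1)
  have := mem_Icc.1 (hS hf2)
  unfold DiagonalsCross at hcross
  simp only at hcross
  -- a diagonal crossing `(k, b)` must start at `a`, contradicting the maximality of `k`
  have hfa : f.1 = a := by
    by_contra hfa
    rcases hjk with hakT | hside
    · exact hT.2.1 _ hakT f hf (Or.inl (by simp only; omega))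
    · have := hside _ hf1; omega
  have : f.2 ∈ K := by
    rw [mem_filter, mem_inter, mem_Ioo]
    exact ⟨⟨hf2, by omega, by omega⟩, Or.inl (by rw [← hfa]; exact hf)⟩
  have := K.le_max' _ this
  omega

theorem card_filter_joined_joined (ha : a ∈ S) (hb : b ∈ S) (hS : S ⊆ Icc a b) {k : ℕ}
    (hk : k ∈ S ∩ Ioo a b) :
    #{T ∈ triangulations S | Joined S T a k ∧ Joined S T k b} =
      #(triangulations (S ∩ Icc a k)) * #(triangulations (S ∩ Icc k b)) := by
  obtain ⟨hkS, hak, hkb⟩ : k ∈ S ∧ a < k ∧ k < b := by simpa only [mem_inter, mem_Ioo] using hk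
  set S' := S \ Ioo a k
  have hjoined : ∀ T, Joined S T k b ↔ Joined S' (outerPart T a k) k b := fun T ↦ by
    refine or_congr (by simp only [outerPart, mem_filter, iff_self_and]; omega)
      ⟨fun h c hc ↦ h c (mem_sdiff.1 hc).1, fun h c hc ↦ ?_⟩
    by_cases hc' : a < c ∧ c < k
    · exact Or.inl (by omega)
    · exact h c (by simp [S', hc, hc'])
  rw [filter_congr fun T _ ↦ and_congr_right' (hjoined T),
    card_filter_joined_and_outerPart ha hkS ⟨b, hb, Or.inr hkb⟩ (Joined S' · k b)]
  congr 1
  have := card_filter_joined_and_outerPart (S := S') (x := k) (y := b) (by simp [S', hkS])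
    (by simp [S', hb, hkb.le]) ⟨a, by simp [S', ha], Or.inl hak⟩ (fun _ ↦ True)
  simp only [and_true, filter_true] at this
  have hin : S' ∩ Icc k b = S ∩ Icc k b := by
    ext c; simp only [S', mem_inter, mem_sdiff, mem_Icc, mem_Ioo]; grind
  have hout : #(S' \ Ioo k b) ≤ 3 := by
    refine (card_le_card (t := {a, k, b}) fun c hc ↦ ?_).trans card_le_three
    simp only [S', mem_sdiff, mem_Ioo] at hc
    have := mem_Icc.1 (hS hc.1.1)
    simp only [mem_insert, mem_singleton]
    omega
  rw [this, hin, triangulations_eq_singleton_empty hout, card_singleton, mul_one]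

/-- Splitting off the triangle on the side `(a, b)`. -/
theorem card_triangulations_eq_sum (ha : a ∈ S) (hb : b ∈ S) (hS : S ⊆ Icc a b) (h3 : 3 ≤ #S) :
    #(triangulations S) = ∑ k ∈ S ∩ Ioo a b,
      #(triangulations (S ∩ Icc a k)) * #(triangulations (S ∩ Icc k b)) := by
  have hcover : triangulations S = (S ∩ Ioo a b).biUnion
      fun k ↦ {T ∈ triangulations S | Joined S T a k ∧ Joined S T k b} := by
    ext T
    simp only [mem_biUnion, mem_filter]
    refine ⟨fun hT ↦ ?_, fun ⟨_, _, hT, _⟩ ↦ hT⟩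
    obtain ⟨k, hk, h⟩ := (mem_triangulations.1 hT).exists_apex ha hb hS h3
    exact ⟨k, hk, hT, h⟩
  rw [hcover, card_biUnion]
  · exact sum_congr rfl fun k hk ↦ card_filter_joined_joined ha hb hS hk
  · intro k hk k' hk' hne
    simp only [coe_inter, Set.mem_inter_iff, mem_coe, coe_Ioo, Set.mem_Ioo] at hk hk'
    refine disjoint_left.2 fun T hT hT' ↦ hne ?_
    simp only [mem_filter, mem_triangulations] at hT hT'
    exact le_antisymm
      (hT.1.2.1.le_of_joined_of_joined hk'.1 hk.1 hk'.2.1 hk.2.2 hT'.2.2 hT.2.1)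
      (hT.1.2.1.le_of_joined_of_joined hk.1 hk'.1 hk.2.1 hk'.2.2 hT.2.2 hT'.2.1)

theorem card_inter_Icc_add_card_inter_Icc (hS : S ⊆ Icc a b) {k : ℕ} (hk : k ∈ S) :
    #(S ∩ Icc a k) + #(S ∩ Icc k b) = #S + 1 := by
  have hunion : S ∩ Icc a k ∪ S ∩ Icc k b = S := by
    ext c; simp only [mem_union, mem_inter, mem_Icc]
    have := fun (hc : c ∈ S) ↦ mem_Icc.1 (hS hc); grind
  have hinter : S ∩ Icc a k ∩ (S ∩ Icc k b) = {k} := by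
    ext c; simp only [mem_inter, mem_Icc, mem_singleton]
    have := mem_Icc.1 (hS hk); grind
  rw [← card_union_add_card_inter, hunion, hinter, card_singleton]

theorem sum_inter_Ioo_card_inter_Icc {M : Type*} [AddCommMonoid M] (ha : a ∈ S) (hb : b ∈ S)
    (hS : S ⊆ Icc a b) (f : ℕ → M) :
    ∑ k ∈ S ∩ Ioo a b, f #(S ∩ Icc a k) = ∑ r ∈ Ico 2 #S, f r := by
  have hmono : StrictMonoOn (fun k ↦ #(S ∩ Icc a k)) S := fun k hk k' hk' hlt ↦
    card_lt_card <| Finset.ssubset_iff_subset_ne.2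
      ⟨inter_subset_inter_left (Icc_subset_Icc_right hlt.le), fun h ↦ by
        have : k' ∈ S ∩ Icc a k := h ▸ mem_inter.2 ⟨hk', mem_Icc.2 ⟨(mem_Icc.1 (hS hk')).1, le_rfl⟩⟩
        simp only [mem_inter, mem_Icc] at this
        omega⟩
  have hinj : Set.InjOn (fun k ↦ #(S ∩ Icc a k)) (S ∩ Ioo a b : Finset ℕ) :=
    (hmono.mono (coe_subset.2 inter_subset_left)).injOn
  rw [← sum_image hinj]
  congr 1
  refine eq_of_subset_of_card_le (fun r hr ↦ ?_) ?_
  · obtain ⟨k, hk, rfl⟩ := mem_image.1 hr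
    simp only [mem_inter, mem_Ioo] at hk
    have h2 : #(S ∩ Icc a a) < #(S ∩ Icc a k) := hmono ha hk.1 hk.2.1
    have h3 : #(S ∩ Icc a k) < #(S ∩ Icc a b) := hmono hk.1 hb hk.2.2
    have hb' : S ∩ Icc a b = S := inter_eq_left.2 hS
    have ha' : S ∩ Icc a a = {a} := by
      ext c; simp only [mem_inter, mem_Icc, mem_singleton]
      exact ⟨fun h ↦ le_antisymm h.2.2 h.2.1, by rintro rfl; exact ⟨ha, le_rfl, le_rfl⟩⟩
    rw [ha', card_singleton] at h2
    rw [hb'] at h3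
    exact mem_Ico.2 ⟨h2, h3⟩
  · rw [card_image_of_injOn hinj, Nat.card_Ico]
    have := card_le_card_inter_Ioo_add_two hS
    omega

theorem card_triangulations (h2 : 2 ≤ #S) : #(triangulations S) = catalan (#S - 2) := by
  induction hm : #S using Nat.strong_induction_on generalizing S with
  | _ m ih =>
  by_cases h3 : m ≤ 3
  · rw [triangulations_eq_singleton_empty (hm ▸ h3), card_singleton]
    interval_cases m <;> simp
  have hne : S.Nonempty := card_pos.1 (by omega)
  set a := S.min' hne
  set b := S.max' hne
  have ha : a ∈ S := S.min'_mem hne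
  have hb : b ∈ S := S.max'_mem hne
  have hS : S ⊆ Icc a b := fun c hc ↦ mem_Icc.2 ⟨S.min'_le c hc, S.le_max' c hc⟩
  have hterm : ∀ k ∈ S ∩ Ioo a b,
      #(triangulations (S ∩ Icc a k)) * #(triangulations (S ∩ Icc k b)) =
        catalan (#(S ∩ Icc a k) - 2) * catalan (m - 1 - #(S ∩ Icc a k)) := by
    intro k hk
    simp only [mem_inter, mem_Ioo] at hk
    have hsum := card_inter_Icc_add_card_inter_Icc hS hk.1
    have h1 : 2 ≤ #(S ∩ Icc a k) := one_lt_card.2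
      ⟨a, by simp [ha, hk.2.1.le], k, by simp [hk.1, hk.2.1.le], hk.2.1.ne⟩
    have h2 : 2 ≤ #(S ∩ Icc k b) := one_lt_card.2
      ⟨k, by simp [hk.1, hk.2.2.le], b, by simp [hb, hk.2.2.le], hk.2.2.ne⟩
    rw [ih _ (by omega) h1 rfl, ih _ (by omega) h2 rfl]
    congr 2
    omega
  rw [card_triangulations_eq_sum ha hb hS (by omega), sum_congr rfl hterm,
    sum_inter_Ioo_card_inter_Icc ha hb hS (fun r ↦ catalan (r - 2) * catalan (m - 1 - r)),
    sum_Ico_eq_sum_range, show m - 2 = m - 3 + 1 by omega, catalan_succ,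
    Fin.sum_univ_eq_sum_range (fun i ↦ catalan i * catalan (m - 3 - i))]
  exact sum_congr (by congr 1; omega) fun i _ ↦ by congr 2 <;> omega

end ConvexPolygon

namespace ConvexPolygon

variable {n i j : ℕ}

/-- The part of the `(2n+2)`-gon cut off by the chord `(i, 2n+3-i)` that contains the side
`{0, 1}`; the diagonals parallel to that side are the chords `(l, 2n+3-l)`, `2 ≤ l ≤ n`. -/
def cap (n i : ℕ) : Finset ℕ := range (2 * n + 2) \ Ioo i (2 * n + 3 - i)

noncomputable def capCount (n i : ℕ) : ℕ :=
  #{T ∈ triangulations (cap n i) | ∀ l ∈ Ico 2 i, (l, 2 * n + 3 - l) ∉ T}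

theorem cap_sdiff_Ioo (hji : j ≤ i) : cap n i \ Ioo j (2 * n + 3 - j) = cap n j := by
  ext c; simp only [cap, mem_sdiff, mem_range, mem_Ioo]; omega

theorem card_cap (hi1 : 1 ≤ i) (hi : i ≤ n + 1) : #(cap n i) = 2 * i := by
  rw [cap, card_sdiff_of_subset (fun c hc ↦ by simp only [mem_Ioo] at hc; simp; omega),
    card_range, Nat.card_Ioo]
  omega

theorem isDiagonalOf_cap (hj : 2 ≤ j) (hji : j < i) (hi : i ≤ n + 1) :
    IsDiagonalOf (cap n i) (j, 2 * n + 3 - j) := by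
  refine ⟨?_, ?_, ⟨j + 1, ?_, by omega⟩, ⟨0, ?_, by omega⟩⟩ <;>
    simp only [cap, mem_sdiff, mem_range, mem_Ioo] <;> omega

theorem card_cap_inter_Icc (hj : 2 ≤ j) (hji : j < i) (hi : i ≤ n + 1) :
    #(cap n i ∩ Icc j (2 * n + 3 - j)) = 2 * (i - j) + 2 := by
  have hdiag := isDiagonalOf_cap hj hji hi
  have := hdiag.card_inter_Icc_add_card_sdiff_Ioo
  rw [cap_sdiff_Ioo hji.le, card_cap (by omega) hi, card_cap (by omega) (by omega)] at this
  omega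

theorem card_filter_first_parallel (hj : 2 ≤ j) (hji : j < i) (hi : i ≤ n + 1) :
    #{T ∈ triangulations (cap n i) |
        (j, 2 * n + 3 - j) ∈ T ∧ ∀ l ∈ Ico 2 j, (l, 2 * n + 3 - l) ∉ T} =
      catalan (2 * (i - j)) * capCount n j := by
  have hout : ∀ T, (∀ l ∈ Ico 2 j, (l, 2 * n + 3 - l) ∉ T) ↔
      ∀ l ∈ Ico 2 j, (l, 2 * n + 3 - l) ∉ outerPart T j (2 * n + 3 - j) := fun T ↦
    forall₂_congr fun l hl ↦ by
      simp only [mem_Ico] at hl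
      have : ¬ (j ≤ l ∧ 2 * n + 3 - l ≤ 2 * n + 3 - j) := by omega
      simp only [outerPart, mem_filter, this, not_false_eq_true, and_true]
  rw [filter_congr fun T _ ↦ and_congr_right' (hout T),
    card_filter_mem_and_outerPart (isDiagonalOf_cap hj hji hi)
      (fun T ↦ ∀ l ∈ Ico 2 j, (l, 2 * n + 3 - l) ∉ T), cap_sdiff_Ioo hji.le,
    card_triangulations, card_cap_inter_Icc hj hji hi, Nat.add_sub_cancel]
  · rfl
  · rw [card_cap_inter_Icc hj hji hi]; omega

/-- Sorting the triangulations of `cap n i` by the first chord `(l, 2n+3-l)` they contain. -/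
theorem card_triangulations_cap_eq (hj : 2 ≤ j) (hji : j ≤ i) (hi : i ≤ n + 1) :
    #(triangulations (cap n i)) =
      #{T ∈ triangulations (cap n i) | ∀ l ∈ Ico 2 j, (l, 2 * n + 3 - l) ∉ T} +
        ∑ l ∈ Ico 2 j, catalan (2 * (i - l)) * capCount n l := by
  induction j, hj using Nat.le_induction with
  | base => rw [Ico_self, sum_empty, add_zero, filter_true_of_mem (by simp)]
  | succ j hj ih =>
    have hsplit : #{T ∈ triangulations (cap n i) | ∀ l ∈ Ico 2 j, (l, 2 * n + 3 - l) ∉ T} =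
        #{T ∈ triangulations (cap n i) | ∀ l ∈ Ico 2 (j + 1), (l, 2 * n + 3 - l) ∉ T} +
        #{T ∈ triangulations (cap n i) |
          (j, 2 * n + 3 - j) ∈ T ∧ ∀ l ∈ Ico 2 j, (l, 2 * n + 3 - l) ∉ T} := by
      rw [← card_filter_add_card_filter_not (fun T ↦ (j, 2 * n + 3 - j) ∉ T), filter_filter,
        filter_filter, ← insert_Ico_right_eq_Ico_add_one hj]
      simp only [forall_mem_insert, not_not]
      congr 2 <;> ext T <;> simp only [mem_filter] <;> tauto
    rw [ih (by omega), hsplit, card_filter_first_parallel hj (by omega) hi, sum_Ico_succ_top hj]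
    ring

theorem capCount_eq (hi2 : 2 ≤ i) (hi : i ≤ n + 1) : capCount n i = 2 * catalan (2 * i - 3) := by
  induction i using Nat.strong_induction_on with
  | _ i ih =>
  obtain ⟨t, rfl⟩ : ∃ t, i = t + 2 := ⟨i - 2, by omega⟩
  have hrec : #(triangulations (cap n (t + 2))) =
      capCount n (t + 2) + ∑ l ∈ Ico 2 (t + 2), catalan (2 * (t + 2 - l)) * capCount n l :=
    card_triangulations_cap_eq hi2 le_rfl hi
  have hsum : ∑ l ∈ Ico 2 (t + 2), catalan (2 * (t + 2 - l)) * capCount n l =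
      2 * ∑ s ∈ range t, catalan (2 * s + 1) * catalan (2 * (t - s)) := by
    rw [sum_Ico_eq_sum_range, mul_sum]
    refine sum_congr (by simp) fun s hs ↦ ?_
    rw [mem_range] at hs
    rw [ih (2 + s) (by omega) (by omega) (by omega), show 2 * (2 + s) - 3 = 2 * s + 1 by omega,
      show 2 * (t + 2 - (2 + s)) = 2 * (t - s) by omega]
    ring
  have hcat := catalan_two_mul_add_two_s13 t
  rw [sum_range_succ, Nat.sub_self, mul_zero, catalan_zero, mul_one] at hcat
  rw [card_triangulations (by rw [card_cap (by omega) hi]; omega), card_cap (by omega) hi,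
    show 2 * (t + 2) - 2 = 2 * t + 2 by omega, hsum] at hrec
  rw [show 2 * (t + 2) - 3 = 2 * t + 1 by omega]
  omega

theorem isDiagonalOf_range_iff {m : ℕ} {e : ℕ × ℕ} :
    IsDiagonalOf (range m) e ↔ IsPolygonDiagonal m e := by
  simp only [IsDiagonalOf, IsPolygonDiagonal, mem_range]
  constructor
  · rintro ⟨h1, h2, ⟨c, hc, hc'⟩, ⟨d, hd, hd'⟩⟩
    omega
  · rintro ⟨h1, h2, h3, h4⟩
    refine ⟨by omega, h2, ⟨e.1 + 1, by omega, by omega⟩, ?_⟩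
    by_cases h0 : e.1 = 0
    · exact ⟨m - 1, by omega, by omega⟩
    · exact ⟨0, by omega, by omega⟩

theorem isTriangulationOf_range_iff {m : ℕ} {T : Finset (ℕ × ℕ)} :
    IsTriangulationOf (range m) T ↔ IsTriangulation m T := by
  simp only [IsTriangulationOf, IsTriangulation, isDiagonalOf_range_iff,
    Noncrossing, card_range]

end ConvexPolygon

theorem IsPolygonDiagonal.exists_eq_of_mod_eq_one {n : ℕ} {e : ℕ × ℕ}
    (he : IsPolygonDiagonal (2 * n + 2) e) (h : (e.1 + e.2) % (2 * n + 2) = 1) :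
    ∃ l ∈ Ico 2 (n + 1), e = (l, 2 * n + 3 - l) := by
  obtain ⟨h1, h2, h3, h4⟩ := he
  have hsum : e.1 + e.2 = 2 * n + 3 := by
    rcases lt_or_ge (e.1 + e.2) (2 * n + 2) with hlt | hge
    · rw [Nat.mod_eq_of_lt hlt] at h; omega
    · rw [Nat.mod_eq_sub_mod hge, Nat.mod_eq_of_lt (by omega)] at h; omega
  exact ⟨e.1, mem_Ico.2 ⟨by omega, by omega⟩, Prod.ext rfl (by simp only; omega)⟩

open ConvexPolygon

theorem count_triangulations_avoiding_parallel_to_01_even (n : ℕ) (hn : 1 ≤ n) :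
    {T : Finset (ℕ × ℕ) | IsTriangulation (2 * n + 2) T ∧
        ∀ e ∈ T, (e.1 + e.2) % (2 * n + 2) ≠ 1}.ncard =
      2 * catalan (2 * n - 1) := by
  have hcap : cap n (n + 1) = range (2 * n + 2) := by
    ext c; simp only [cap, mem_sdiff, mem_range, mem_Ioo]; omega
  have hset : {T : Finset (ℕ × ℕ) | IsTriangulation (2 * n + 2) T ∧
      ∀ e ∈ T, (e.1 + e.2) % (2 * n + 2) ≠ 1} =
      {T ∈ triangulations (cap n (n + 1)) | ∀ l ∈ Ico 2 (n + 1), (l, 2 * n + 3 - l) ∉ T} := by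
    ext T
    simp only [Set.mem_ofPred_eq, coe_filter, hcap, mem_triangulations, isTriangulationOf_range_iff]
    refine and_congr_right fun hT ↦ ⟨fun h l hl hlT ↦ h _ hlT ?_, fun h e he hmod ↦ ?_⟩
    · rw [mem_Ico] at hl
      rw [show l + (2 * n + 3 - l) = 2 * n + 2 + 1 by omega, Nat.add_mod_left]
      exact Nat.mod_eq_of_lt (by omega)
    · obtain ⟨l, hl, rfl⟩ := (hT.1 e he).exists_eq_of_mod_eq_one hmod
      exact h l hl he
  rw [hset, Set.ncard_coe_finset, ← capCount, capCount_eq (by omega) le_rfl,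
    show 2 * (n + 1) - 3 = 2 * n - 1 by omega]
end
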